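/- arXiv:1808.09213 — 2 statements merged into one kernel-verified Lean document; each statement's English description precedes it below -/
import Mathlib

section
/- Let G and G' be CGS-games on bisimilar concurrent game structures with identical goal sets, and let f be a trace-based strategy profile. Then f is a Nash equilibrium in trace-based strategies in G if and only if f is a Nash equilibrium in trace-based strategies in G'. -/
namespace CGSGame

abbrev Dir (Ag Ac : Type) := Ag → Ac

structure CGS (Ag AP Ac St : Type) where
  init : St
  feasible : Ag → St → Set Ac
  feasible_nonempty : ∀ i s, (feasible i s).Nonempty
  label : St → Set AP
  trans : St → Dir Ag Ac → St

variable {Ag AP Ac St St' : Type}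

def CGS.legal (M : CGS Ag AP Ac St) (s : St) (d : Dir Ag Ac) : Prop :=
  ∀ i, d i ∈ M.feasible i s

def CGS.step (M : CGS Ag AP Ac St) (s : St) (d : Dir Ag Ac) (s' : St) : Prop :=
  M.legal s d ∧ M.trans s d = s'

structure IsBisim (M : CGS Ag AP Ac St) (M' : CGS Ag AP Ac St') (R : St → St' → Prop) : Prop where
  label_eq : ∀ s t, R s t → M.label s = M'.label t
  forth : ∀ s t s' d, R s t → M.step s d s' → ∃ t', M'.step t d t' ∧ R s' t'
  back : ∀ s t t' d, R s t → M'.step t d t' → ∃ s', M.step s d s' ∧ R s' t'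

def BisimState (M : CGS Ag AP Ac St) (M' : CGS Ag AP Ac St') (s : St) (t : St') : Prop :=
  ∃ R, IsBisim M M' R ∧ R s t

def Bisimilar (M : CGS Ag AP Ac St) (M' : CGS Ag AP Ac St') : Prop :=
  BisimState M M' M.init M'.init

def CGS.statesOf (M : CGS Ag AP Ac St) (k : ℕ → Dir Ag Ac) : ℕ → St
  | 0 => M.init
  | n + 1 => M.trans (M.statesOf k n) (k n)

def CGS.InfComp (M : CGS Ag AP Ac St) (k : ℕ → Dir Ag Ac) : Prop :=
  ∀ n, M.legal (M.statesOf k n) (k n)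

def CGS.runFrom (M : CGS Ag AP Ac St) : St → List (Dir Ag Ac) → List St
  | s, [] => [s]
  | s, d :: l => s :: M.runFrom (M.trans s d) l

def CGS.runOf (M : CGS Ag AP Ac St) (k : List (Dir Ag Ac)) : List St :=
  M.runFrom M.init k

def CGS.endFrom (M : CGS Ag AP Ac St) : St → List (Dir Ag Ac) → St
  | s, [] => s
  | s, d :: l => M.endFrom (M.trans s d) l

def CGS.finalState (M : CGS Ag AP Ac St) (k : List (Dir Ag Ac)) : St :=
  M.endFrom M.init k

def CGS.legalFrom (M : CGS Ag AP Ac St) : St → List (Dir Ag Ac) → Prop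
  | _, [] => True
  | s, d :: l => M.legal s d ∧ M.legalFrom (M.trans s d) l

def CGS.FinComp (M : CGS Ag AP Ac St) (k : List (Dir Ag Ac)) : Prop :=
  M.legalFrom M.init k

def CGS.traceOf (M : CGS Ag AP Ac St) (k : List (Dir Ag Ac)) : List (Set AP) :=
  (M.runOf k).map M.label

def CGS.infTraceOf (M : CGS Ag AP Ac St) (k : ℕ → Dir Ag Ac) : ℕ → Set AP :=
  fun n => M.label (M.statesOf k n)

def CGS.IsHistory (M : CGS Ag AP Ac St) (p : List St) : Prop :=
  ∃ k, M.FinComp k ∧ p = M.runOf k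

def CGS.IsCompStrategy (M : CGS Ag AP Ac St) (i : Ag) (f : List (Dir Ag Ac) → Ac) : Prop :=
  ∀ k, M.FinComp k → f k ∈ M.feasible i (M.finalState k)

def CGS.IsRunStrategy (M : CGS Ag AP Ac St) (i : Ag) (f : List St → Ac) : Prop :=
  ∀ k, M.FinComp k → f (M.runOf k) ∈ M.feasible i (M.finalState k)

def CGS.IsTraceStrategy (M : CGS Ag AP Ac St) (i : Ag) (g : List (Set AP) → Ac) : Prop :=
  ∀ k, M.FinComp k → g (M.traceOf k) ∈ M.feasible i (M.finalState k)

def CGS.RunInvariant (M : CGS Ag AP Ac St) (f : List (Dir Ag Ac) → Ac) : Prop :=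
  ∀ k k', M.FinComp k → M.FinComp k' → M.runOf k = M.runOf k' → f k = f k'

def CGS.TraceInvariant (M : CGS Ag AP Ac St) (f : List (Dir Ag Ac) → Ac) : Prop :=
  ∀ k k', M.FinComp k → M.FinComp k' → M.traceOf k = M.traceOf k' → f k = f k'

def inducedPrefix (f : Ag → List (Dir Ag Ac) → Ac) : ℕ → List (Dir Ag Ac)
  | 0 => []
  | n + 1 => inducedPrefix f n ++ [fun i => f i (inducedPrefix f n)]

/-- The computation induced by a profile of computation-based strategies. -/
def inducedComp (_M : CGS Ag AP Ac St) (f : Ag → List (Dir Ag Ac) → Ac) : ℕ → Dir Ag Ac :=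
  fun n i => f i (inducedPrefix f n)

def inducedPrefixRun (M : CGS Ag AP Ac St) (f : Ag → List St → Ac) : ℕ → List (Dir Ag Ac)
  | 0 => []
  | n + 1 => inducedPrefixRun M f n ++ [fun i => f i (M.runOf (inducedPrefixRun M f n))]

/-- The computation induced by a profile of run-based strategies. -/
def inducedCompRun (M : CGS Ag AP Ac St) (f : Ag → List St → Ac) : ℕ → Dir Ag Ac :=
  fun n i => f i (M.runOf (inducedPrefixRun M f n))

def inducedPrefixTr (M : CGS Ag AP Ac St) (g : Ag → List (Set AP) → Ac) : ℕ → List (Dir Ag Ac)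
  | 0 => []
  | n + 1 => inducedPrefixTr M g n ++ [fun i => g i (M.traceOf (inducedPrefixTr M g n))]

/-- The computation induced by a profile of trace-based strategies. -/
def inducedCompTr (M : CGS Ag AP Ac St) (g : Ag → List (Set AP) → Ac) : ℕ → Dir Ag Ac :=
  fun n i => g i (M.traceOf (inducedPrefixTr M g n))

/-- Statewise bisimilarity of (finite) runs. -/
def SWBisim (M : CGS Ag AP Ac St) (M' : CGS Ag AP Ac St') (p : List St) (p' : List St') : Prop :=
  List.Forall₂ (BisimState M M') p p'

/-- A run-based strategy is bisimulation-invariant if it chooses the same action at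
statewise bisimilar histories. -/
def CGS.BisimInvariant (M : CGS Ag AP Ac St) (f : List St → Ac) : Prop :=
  ∀ p p', M.IsHistory p → M.IsHistory p' → SWBisim M M p p' → f p = f p'

open Classical in
/-- The strategy of a bisimilar structure corresponding to a bisimulation-invariant strategy. -/
noncomputable def tilde [Inhabited Ac] (M : CGS Ag AP Ac St) (M' : CGS Ag AP Ac St')
    (f : List St → Ac) : List St' → Ac :=
  fun p' => if h : ∃ p, M.IsHistory p ∧ SWBisim M M' p p' then f h.choose else default

section NE
variable [DecidableEq Ag]

def CompNE (M : CGS Ag AP Ac St) (G : Ag → Set (ℕ → Dir Ag Ac))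
    (f : Ag → List (Dir Ag Ac) → Ac) : Prop :=
  (∀ i, M.IsCompStrategy i (f i)) ∧
  ∀ i g, M.IsCompStrategy i g →
    inducedComp M (Function.update f i g) ∈ G i → inducedComp M f ∈ G i

def RunNE (M : CGS Ag AP Ac St) (G : Ag → Set (ℕ → Dir Ag Ac))
    (f : Ag → List St → Ac) : Prop :=
  (∀ i, M.IsRunStrategy i (f i)) ∧
  ∀ i g, M.IsRunStrategy i g →
    inducedCompRun M (Function.update f i g) ∈ G i → inducedCompRun M f ∈ G i

def TraceNE (M : CGS Ag AP Ac St) (G : Ag → Set (ℕ → Dir Ag Ac))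
    (g : Ag → List (Set AP) → Ac) : Prop :=
  (∀ i, M.IsTraceStrategy i (g i)) ∧
  ∀ i h, M.IsTraceStrategy i h →
    inducedCompTr M (Function.update g i h) ∈ G i → inducedCompTr M g ∈ G i

def RunInvNE (M : CGS Ag AP Ac St) (G : Ag → Set (ℕ → Dir Ag Ac))
    (f : Ag → List (Dir Ag Ac) → Ac) : Prop :=
  (∀ i, M.IsCompStrategy i (f i) ∧ M.RunInvariant (f i)) ∧
  ∀ i g, M.IsCompStrategy i g → M.RunInvariant g →
    inducedComp M (Function.update f i g) ∈ G i → inducedComp M f ∈ G i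

def TraceInvNE (M : CGS Ag AP Ac St) (G : Ag → Set (ℕ → Dir Ag Ac))
    (f : Ag → List (Dir Ag Ac) → Ac) : Prop :=
  (∀ i, M.IsCompStrategy i (f i) ∧ M.TraceInvariant (f i)) ∧
  ∀ i g, M.IsCompStrategy i g → M.TraceInvariant g →
    inducedComp M (Function.update f i g) ∈ G i → inducedComp M f ∈ G i

def BisimInvNE (M : CGS Ag AP Ac St) (G : Ag → Set (ℕ → Dir Ag Ac))
    (f : Ag → List St → Ac) : Prop :=
  (∀ i, M.IsRunStrategy i (f i) ∧ M.BisimInvariant (f i)) ∧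
  ∀ i g, M.IsRunStrategy i g → M.BisimInvariant g →
    inducedCompRun M (Function.update f i g) ∈ G i → inducedCompRun M f ∈ G i

end NE

section AuxProof
open scoped Classical
variable {M : CGS Ag AP Ac St} {M' : CGS Ag AP Ac St'} {R : St → St' → Prop}

lemma IsBisim.symm' (hR : IsBisim M M' R) : IsBisim M' M (fun t s => R s t) where
  label_eq := fun t s hts => (hR.label_eq s t hts).symm
  forth := fun t s t' d hts hstep => hR.back s t t' d hts hstep
  back := fun t s s' d hts hstep => hR.forth s t s' d hts hstep

lemma Bisimilar.symm' (h : Bisimilar M M') : Bisimilar M' M := by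
  obtain ⟨R, hR, h0⟩ := h
  exact ⟨fun t s => R s t, hR.symm', h0⟩

lemma legal_iff' (hR : IsBisim M M' R) {s t} (hst : R s t) (d : Dir Ag Ac) :
    M.legal s d ↔ M'.legal t d := by
  constructor
  · intro hl
    obtain ⟨t', ht', _⟩ := hR.forth s t (M.trans s d) d hst ⟨hl, rfl⟩
    exact ht'.1
  · intro hl
    obtain ⟨s', hs', _⟩ := hR.back s t (M'.trans t d) d hst ⟨hl, rfl⟩
    exact hs'.1

lemma rel_trans' (hR : IsBisim M M' R) {s t} (hst : R s t) {d : Dir Ag Ac}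
    (hl : M.legal s d) : R (M.trans s d) (M'.trans t d) := by
  obtain ⟨t', ⟨_, ht⟩, hr⟩ := hR.forth s t (M.trans s d) d hst ⟨hl, rfl⟩
  rw [ht]; exact hr

lemma feasible_eq' (hR : IsBisim M M' R) {s t} (hst : R s t) (i : Ag) :
    M.feasible i s = M'.feasible i t := by
  ext a
  constructor
  · intro ha
    set d : Dir Ag Ac := fun j => if j = i then a else (M.feasible_nonempty j s).choose with hd
    have hl : M.legal s d := by
      intro j
      by_cases hj : j = i
      · subst hj; simpa [hd] using ha
      · simpa [hd, hj] using (M.feasible_nonempty j s).choose_spec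
    have := ((legal_iff' hR hst d).1 hl) i
    simpa [hd] using this
  · intro ha
    set d : Dir Ag Ac := fun j => if j = i then a else (M'.feasible_nonempty j t).choose with hd
    have hl : M'.legal t d := by
      intro j
      by_cases hj : j = i
      · subst hj; simpa [hd] using ha
      · simpa [hd, hj] using (M'.feasible_nonempty j t).choose_spec
    have := ((legal_iff' hR hst d).2 hl) i
    simpa [hd] using this

lemma core_lemma (hR : IsBisim M M' R) :
    ∀ (k : List (Dir Ag Ac)) (s : St) (t : St'), R s t →
      (M.legalFrom s k ↔ M'.legalFrom t k) ∧
      (M.legalFrom s k → R (M.endFrom s k) (M'.endFrom t k) ∧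
        (M.runFrom s k).map M.label = (M'.runFrom t k).map M'.label)
  | [], s, t, hst => by
      refine ⟨Iff.rfl, fun _ => ⟨hst, ?_⟩⟩
      simp [CGS.runFrom, hR.label_eq s t hst]
  | d :: l, s, t, hst => by
      constructor
      · constructor
        · rintro ⟨hl, hrest⟩
          refine ⟨(legal_iff' hR hst d).1 hl, ?_⟩
          exact ((core_lemma hR l _ _ (rel_trans' hR hst hl)).1).1 hrest
        · rintro ⟨hl, hrest⟩
          have hl' := (legal_iff' hR hst d).2 hl
          exact ⟨hl', ((core_lemma hR l _ _ (rel_trans' hR hst hl')).1).2 hrest⟩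
      · rintro ⟨hl, hrest⟩
        have hrel := rel_trans' hR hst hl
        obtain ⟨h1, h2⟩ := (core_lemma hR l _ _ hrel).2 hrest
        exact ⟨h1, by simp [CGS.runFrom, hR.label_eq s t hst, h2]⟩

lemma finComp_iff' (hR : IsBisim M M' R) (h0 : R M.init M'.init) (k : List (Dir Ag Ac)) :
    M.FinComp k ↔ M'.FinComp k :=
  (core_lemma hR k _ _ h0).1

lemma trace_eq' (hR : IsBisim M M' R) (h0 : R M.init M'.init) {k : List (Dir Ag Ac)}
    (hk : M.FinComp k) : M.traceOf k = M'.traceOf k :=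
  ((core_lemma hR k _ _ h0).2 hk).2

lemma final_rel' (hR : IsBisim M M' R) (h0 : R M.init M'.init) {k : List (Dir Ag Ac)}
    (hk : M.FinComp k) : R (M.finalState k) (M'.finalState k) :=
  ((core_lemma hR k _ _ h0).2 hk).1

lemma legalFrom_append_singleton (M : CGS Ag AP Ac St) :
    ∀ (k : List (Dir Ag Ac)) (s : St) (d : Dir Ag Ac),
      M.legalFrom s (k ++ [d]) ↔ M.legalFrom s k ∧ M.legal (M.endFrom s k) d
  | [], s, d => by simp [CGS.legalFrom, CGS.endFrom]
  | e :: l, s, d => by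
      simp [CGS.legalFrom, CGS.endFrom, legalFrom_append_singleton M l, and_assoc]

lemma traceStrategy_transfer (hR : IsBisim M M' R) (h0 : R M.init M'.init)
    {i : Ag} {h' : List (Set AP) → Ac} (hs : M.IsTraceStrategy i h') :
    M'.IsTraceStrategy i h' := by
  intro k hk
  have hkM : M.FinComp k := (finComp_iff' hR h0 k).2 hk
  rw [← trace_eq' hR h0 hkM, ← feasible_eq' hR (final_rel' hR h0 hkM) i]
  exact hs k hkM

lemma prefix_eq' (hR : IsBisim M M' R) (h0 : R M.init M'.init)
    (g : Ag → List (Set AP) → Ac) (hg : ∀ i, M.IsTraceStrategy i (g i)) :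
    ∀ n, M.FinComp (inducedPrefixTr M g n) ∧ inducedPrefixTr M g n = inducedPrefixTr M' g n
  | 0 => ⟨trivial, rfl⟩
  | n + 1 => by
      obtain ⟨hfc, heq⟩ := prefix_eq' hR h0 g hg n
      have htr : M.traceOf (inducedPrefixTr M g n) = M'.traceOf (inducedPrefixTr M' g n) := by
        rw [← heq]; exact trace_eq' hR h0 hfc
      constructor
      · show M.FinComp _
        unfold inducedPrefixTr
        rw [CGS.FinComp, legalFrom_append_singleton]
        exact ⟨hfc, fun i => hg i _ hfc⟩
      · unfold inducedPrefixTr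
        rw [htr, heq]

lemma inducedCompTr_eq' (hR : IsBisim M M' R) (h0 : R M.init M'.init)
    (g : Ag → List (Set AP) → Ac) (hg : ∀ i, M.IsTraceStrategy i (g i)) :
    inducedCompTr M g = inducedCompTr M' g := by
  funext n i
  obtain ⟨hfc, heq⟩ := prefix_eq' hR h0 g hg n
  have htr : M.traceOf (inducedPrefixTr M g n) = M'.traceOf (inducedPrefixTr M' g n) := by
    rw [← heq]; exact trace_eq' hR h0 hfc
  simp [inducedCompTr, htr]

lemma traceNE_transfer [DecidableEq Ag] (hR : IsBisim M M' R) (h0 : R M.init M'.init)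
    (G : Ag → Set (ℕ → Dir Ag Ac)) (g : Ag → List (Set AP) → Ac)
    (hne : TraceNE M G g) : TraceNE M' G g := by
  obtain ⟨hstr, hdev⟩ := hne
  have hstr' : ∀ i, M'.IsTraceStrategy i (g i) :=
    fun i => traceStrategy_transfer hR h0 (hstr i)
  refine ⟨hstr', ?_⟩
  intro i h hh hmem
  have hhM : M.IsTraceStrategy i h :=
    traceStrategy_transfer hR.symm' h0 hh
  have hupd : ∀ j, M.IsTraceStrategy j (Function.update g i h j) := by
    intro j
    by_cases hj : j = i
    · subst hj; simpa using hhM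
    · simpa [Function.update_of_ne hj] using hstr j
  have e1 : inducedCompTr M (Function.update g i h) = inducedCompTr M' (Function.update g i h) :=
    inducedCompTr_eq' hR h0 _ hupd
  have e2 : inducedCompTr M g = inducedCompTr M' g :=
    inducedCompTr_eq' hR h0 g hstr
  rw [← e2]
  exact hdev i h hhM (by rw [e1]; exact hmem)

end AuxProof

theorem trace_NE_invariance [DecidableEq Ag]
    (M : CGS Ag AP Ac St) (M' : CGS Ag AP Ac St') (h : Bisimilar M M')
    (G : Ag → Set (ℕ → Dir Ag Ac)) (g : Ag → List (Set AP) → Ac) :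
    TraceNE M G g ↔ TraceNE M' G g := by
  obtain ⟨R, hR, h0⟩ := h
  exact ⟨traceNE_transfer hR h0 G g, traceNE_transfer hR.symm' h0 G g⟩
end CGSGame
end

section
/- Let M and M' be bisimilar concurrent game structures and f = (f_1,...,f_n) a profile of bisimulation-invariant run-based strategies in M. Then κ_M(f) = κ_{M'}(f̃), where f̃ = (f̃_1,...,f̃_n) is the transferred profile in M'. -/
namespace CGSGame

variable {Ag AP Ac St St' : Type}

/-- Bisimilarity of states composes to a self-bisimulation. -/
lemma bisimState_comp (M : CGS Ag AP Ac St) (M' : CGS Ag AP Ac St') {a c : St} {b : St'}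
    (h1 : BisimState M M' a b) (h2 : BisimState M M' c b) : BisimState M M a c := by
  obtain ⟨R1, hR1, hab⟩ := h1
  obtain ⟨R2, hR2, hcb⟩ := h2
  refine ⟨fun s s'' => ∃ t, R1 s t ∧ R2 s'' t, ⟨?_, ?_, ?_⟩, b, hab, hcb⟩
  · rintro s s'' ⟨t, h1, h2⟩
    rw [hR1.label_eq s t h1, hR2.label_eq s'' t h2]
  · rintro s s'' s' d ⟨t, h1, h2⟩ hstep
    obtain ⟨t', ht', hR⟩ := hR1.forth s t s' d h1 hstep
    obtain ⟨u, hu, hRu⟩ := hR2.back s'' t t' d h2 ht'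
    exact ⟨u, hu, t', hR, hRu⟩
  · rintro s s'' s' d ⟨t, h1, h2⟩ hstep
    obtain ⟨t', ht', hR⟩ := hR2.forth s'' t s' d h2 hstep
    obtain ⟨u, hu, hRu⟩ := hR1.back s t t' d h1 ht'
    exact ⟨u, hu, t', hRu, hR⟩

lemma swBisim_comp (M : CGS Ag AP Ac St) (M' : CGS Ag AP Ac St') {p q : List St} {p' : List St'}
    (h1 : SWBisim M M' p p') (h2 : SWBisim M M' q p') : SWBisim M M p q := by
  induction h1 generalizing q with
  | nil => cases h2; exact List.Forall₂.nil
  | cons hab _ ih =>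
    cases h2 with
    | cons hcb htail => exact List.Forall₂.cons (bisimState_comp M M' hab hcb) (ih htail)

lemma run_transfer {R : St → St' → Prop} (M : CGS Ag AP Ac St) (M' : CGS Ag AP Ac St')
    (hR : IsBisim M M' R) :
    ∀ (k : List (Dir Ag Ac)) (s : St) (t : St'), R s t → M.legalFrom s k →
      M'.legalFrom t k ∧ List.Forall₂ (BisimState M M') (M.runFrom s k) (M'.runFrom t k) ∧
        R (M.endFrom s k) (M'.endFrom t k) := by
  intro k
  induction k with
  | nil =>
    intro s t hst _
    exact ⟨trivial, List.Forall₂.cons ⟨R, hR, hst⟩ List.Forall₂.nil, hst⟩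
  | cons d l ih =>
    intro s t hst hleg
    obtain ⟨hld, hrest⟩ := hleg
    obtain ⟨t', ⟨hlt, htr⟩, hR'⟩ := hR.forth s t (M.trans s d) d hst ⟨hld, rfl⟩
    subst htr
    obtain ⟨h1, h2, h3⟩ := ih (M.trans s d) (M'.trans t d) hR' hrest
    exact ⟨⟨hlt, h1⟩, List.Forall₂.cons ⟨R, hR, hst⟩ h2, h3⟩

lemma legalFrom_append (M : CGS Ag AP Ac St) (d : Dir Ag Ac) :
    ∀ (k : List (Dir Ag Ac)) (s : St), M.legalFrom s k → M.legal (M.endFrom s k) d →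
      M.legalFrom s (k ++ [d]) := by
  intro k
  induction k with
  | nil => intro s _ hd; exact ⟨hd, trivial⟩
  | cons e l ih =>
    rintro s ⟨he, hrest⟩ hd
    exact ⟨he, ih _ hrest hd⟩

theorem tilde_same_computation [Inhabited Ac]
    (M : CGS Ag AP Ac St) (M' : CGS Ag AP Ac St') (hb : Bisimilar M M')
    (f : Ag → List St → Ac)
    (hf : ∀ i, M.IsRunStrategy i (f i) ∧ M.BisimInvariant (f i)) :
    inducedCompRun M f = inducedCompRun M' (fun i => tilde M M' (f i)) := by
  classical
  obtain ⟨R, hR, hinit⟩ := hb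
  -- key evaluation of tilde on runs of common finite computations
  have key : ∀ k : List (Dir Ag Ac), M.FinComp k →
      ∀ i, tilde M M' (f i) (M'.runOf k) = f i (M.runOf k) := by
    intro k hk i
    obtain ⟨hleg', hsw, _⟩ := run_transfer M M' hR k M.init M'.init hinit hk
    have hex : ∃ p, M.IsHistory p ∧ SWBisim M M' p (M'.runOf k) :=
      ⟨M.runOf k, ⟨k, hk, rfl⟩, hsw⟩
    rw [tilde, dif_pos hex]
    obtain ⟨hhist, hsw'⟩ := hex.choose_spec
    exact (hf i).2 _ _ hhist ⟨k, hk, rfl⟩ (swBisim_comp M M' hsw' hsw)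
  -- the induced prefixes coincide and are finite computations of M
  have pref : ∀ n, inducedPrefixRun M f n =
      inducedPrefixRun M' (fun i => tilde M M' (f i)) n ∧ M.FinComp (inducedPrefixRun M f n) := by
    intro n
    induction n with
    | zero => exact ⟨rfl, trivial⟩
    | succ n ih =>
      obtain ⟨heq, hfc⟩ := ih
      set k := inducedPrefixRun M f n with hkdef
      have hd : M.legal (M.endFrom M.init k) (fun i => f i (M.runOf k)) :=
        fun i => (hf i).1 k hfc
      constructor
      · show k ++ _ = inducedPrefixRun M' (fun i => tilde M M' (f i)) n ++ _
        rw [← heq]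
        congr 2
        funext i
        exact (key k hfc i).symm
      · exact legalFrom_append M _ k M.init hfc hd
  funext n i
  show f i (M.runOf (inducedPrefixRun M f n)) = tilde M M' (f i)
    (M'.runOf (inducedPrefixRun M' (fun i => tilde M M' (f i)) n))
  obtain ⟨heq, hfc⟩ := pref n
  rw [← heq, key _ hfc i]
end CGSGame
end
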